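/- Let G be a bipartite graph and G⃗₁, G⃗₂ two of its orientations. Then G⃗₁ and G⃗₂ are push equivalent if and only if every cycle of G has the same balance in G⃗₁ and G⃗₂, where an oriented even cycle of length 2ℓ is balanced if the number of forward arcs (with respect to either traversal) is congruent to ℓ modulo 2. -/

import Mathlib

/-!
Record where the two orientations differ as the `ZMod 2`-valued function `arcDiff o₁ o₂` on
ordered adjacent pairs; it is antisymmetric because both orientations are. Pushing a set `S`
changes an orientation by the coboundary of the indicator of `S`, and the two balances of a
cycle agree exactly when `arcDiff o₁ o₂` sums to zero around it. So the theorem says that an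
antisymmetric edge function is a coboundary iff it sums to zero around every cycle. For the
nontrivial direction, summing along a walk is unchanged by `Walk.bypass`, since every loop
that `bypass` cuts out is a cycle or an edge traversed back and forth; hence closed walks sum
to zero, and summing along walks from a fixed root of each component gives the potential.
-/

namespace SimpleGraph.Walk

variable {V A : Type*} {G : SimpleGraph V}

section AddCommMonoid

variable [AddCommMonoid A]

def dartSum (c : V → V → A) {u v : V} (w : G.Walk u v) : A :=
  (w.darts.map fun d => c d.fst d.snd).sum

variable (c : V → V → A)

@[simp] lemma dartSum_nil {u : V} : (nil : G.Walk u u).dartSum c = 0 := rfl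

@[simp] lemma dartSum_cons {u v w : V} (h : G.Adj u v) (p : G.Walk v w) :
    (cons h p).dartSum c = c u v + p.dartSum c := by
  simp [dartSum]

@[simp] lemma dartSum_append {u v w : V} (p : G.Walk u v) (q : G.Walk v w) :
    (p.append q).dartSum c = p.dartSum c + q.dartSum c := by
  simp [dartSum]

@[simp] lemma dartSum_concat {u v w : V} (p : G.Walk u v) (h : G.Adj v w) :
    (p.concat h).dartSum c = p.dartSum c + c v w := by
  simp [concat_eq_append]

@[simp] lemma dartSum_copy {u v u' v' : V} (p : G.Walk u v) (hu : u = u') (hv : v = v') :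
    (p.copy hu hv).dartSum c = p.dartSum c := by
  subst hu hv; rfl

variable {c}

lemma dartSum_congr {c' : V → V → A} (hc : ∀ u v, G.Adj u v → c u v = c' u v) {u v : V}
    (w : G.Walk u v) : w.dartSum c = w.dartSum c' := by
  unfold dartSum
  exact congrArg List.sum (List.map_congr_left fun d _ => hc _ _ d.adj)

end AddCommMonoid

lemma natCast_length_filter_darts [AddCommMonoidWithOne A] (b : V → V → Bool) {u v : V}
    (w : G.Walk u v) :
    ((w.darts.filter fun d => b d.fst d.snd).length : A) =
      w.dartSum fun x y => ((b x y).toNat : A) := by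
  induction w with
  | nil => simp
  | @cons x y _ h p ih => by_cases hb : b x y <;> simp [hb, ih, add_comm]

section AddCommGroup

variable [AddCommGroup A] {c : V → V → A}

lemma dartSum_sub (c₁ c₂ : V → V → A) {u v : V} (w : G.Walk u v) :
    w.dartSum (fun x y => c₁ x y - c₂ x y) = w.dartSum c₁ - w.dartSum c₂ := by
  induction w with
  | nil => simp
  | cons h p ih => rw [dartSum_cons, dartSum_cons, dartSum_cons, ih]; abel

lemma dartSum_potential (s : V → A) {u v : V} (w : G.Walk u v) :
    w.dartSum (fun x y => s y - s x) = s v - s u := by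
  induction w with
  | nil => simp
  | cons h p ih => rw [dartSum_cons, ih]; abel

lemma dartSum_reverse (hc : ∀ u v, G.Adj u v → c v u = -c u v) {u v : V} (w : G.Walk u v) :
    w.reverse.dartSum c = -w.dartSum c := by
  induction w with
  | nil => simp
  | cons h p ih => simp [ih, hc _ _ h]

lemma dartSum_cons_eq_zero_of_isPath (hc : ∀ u v, G.Adj u v → c v u = -c u v)
    (hcyc : ∀ v (w : G.Walk v v), w.IsCycle → w.dartSum c = 0)
    {u v : V} (h : G.Adj u v) {p : G.Walk v u} (hp : p.IsPath) :
    (cons h p).dartSum c = 0 := by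
  by_cases he : s(u, v) ∈ p.edges
  · rw [hp.eq_adj_toWalk_of_mem_edges (Sym2.eq_swap ▸ he)]
    simp [Adj.toWalk, hc _ _ h]
  · exact hcyc u _ ((cons_isCycle_iff p h).2 ⟨hp, he⟩)

lemma dartSum_bypass [DecidableEq V] (hc : ∀ u v, G.Adj u v → c v u = -c u v)
    (hcyc : ∀ v (w : G.Walk v v), w.IsCycle → w.dartSum c = 0) {u v : V} (w : G.Walk u v) :
    w.bypass.dartSum c = w.dartSum c := by
  induction w with
  | nil => rfl
  | @cons u y v h p ih =>
    rw [bypass]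
    split_ifs with hu
    · have hloop := dartSum_cons_eq_zero_of_isPath hc hcyc h
        (p.bypass_isPath.takeUntil hu)
      calc (p.bypass.dropUntil u hu).dartSum c
          = (cons h (p.bypass.takeUntil u hu)).dartSum c +
              (p.bypass.dropUntil u hu).dartSum c := by
            rw [hloop, zero_add]
        _ = c u y + p.dartSum c := by
            rw [dartSum_cons, add_assoc, ← dartSum_append, take_spec, ih]
    · rw [dartSum_cons, dartSum_cons, ih]

lemma dartSum_eq_zero_of_closed (hc : ∀ u v, G.Adj u v → c v u = -c u v)
    (hcyc : ∀ v (w : G.Walk v v), w.IsCycle → w.dartSum c = 0) {v : V} (w : G.Walk v v) :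
    w.dartSum c = 0 := by
  classical
  rw [← dartSum_bypass hc hcyc, (isPath_iff_nil.1 w.bypass_isPath).eq_nil, dartSum_nil]

end AddCommGroup

end SimpleGraph.Walk

namespace SimpleGraph

open Walk

variable {V A : Type*} [AddCommGroup A] {G : SimpleGraph V} {c : V → V → A}

theorem exists_potential_iff_forall_isCycle_dartSum_eq_zero
    (hc : ∀ u v, G.Adj u v → c v u = -c u v) :
    (∃ s : V → A, ∀ u v, G.Adj u v → c u v = s v - s u) ↔
      ∀ v (w : G.Walk v v), w.IsCycle → w.dartSum c = 0 := by
  refine ⟨fun ⟨s, hs⟩ v w _ => by rw [w.dartSum_congr hs, w.dartSum_potential, sub_self],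
    fun hcyc => ?_⟩
  let root : V → V := fun v => (G.connectedComponentMk v).out
  have hroot (v : V) : G.Reachable (root v) v := ConnectedComponent.exact (Quot.out_eq _)
  refine ⟨fun v => (hroot v).some.dartSum c, fun u v h => ?_⟩
  have e : root v = root u :=
    congrArg Quot.out (ConnectedComponent.connectedComponentMk_eq_of_adj h).symm
  have hloop := dartSum_eq_zero_of_closed hc hcyc
    (((hroot u).some.concat h).append ((hroot v).some.copy e rfl).reverse)
  rw [dartSum_append, dartSum_reverse hc, dartSum_copy, dartSum_concat] at hloop
  rw [← sub_eq_zero, ← hloop]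
  abel

end SimpleGraph

section Orientation

variable {V : Type*}

def arcDiff (o₁ o₂ : V → V → Bool) (x y : V) : ZMod 2 := (o₂ x y).toNat - (o₁ x y).toNat

lemma arcDiff_swap {R : V → V → Prop} {o₁ o₂ : V → V → Bool}
    (h₁ : ∀ u v, R u v → o₁ u v = !o₁ v u) (h₂ : ∀ u v, R u v → o₂ u v = !o₂ v u)
    (u v : V) (h : R u v) : arcDiff o₁ o₂ v u = -arcDiff o₁ o₂ u v := by
  simp only [arcDiff, h₁ u v h, h₂ u v h]
  cases o₁ v u <;> cases o₂ v u <;> decide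

lemma exists_xor_eq_iff_exists_arcDiff_eq (R : V → V → Prop) (o₁ o₂ : V → V → Bool) :
    (∃ s : V → Bool, ∀ u v, R u v → Bool.xor (o₁ u v) (Bool.xor (s u) (s v)) = o₂ u v) ↔
      ∃ t : V → ZMod 2, ∀ u v, R u v → arcDiff o₁ o₂ u v = t v - t u := by
  have hcast : Function.Surjective fun b : Bool => (b.toNat : ZMod 2) := by decide
  rw [hcast.comp_left.exists]
  refine exists_congr fun s => forall₂_congr fun u v => imp_congr_right fun _ => ?_
  simp only [arcDiff, Function.comp_apply]
  cases o₁ u v <;> cases o₂ u v <;> cases s u <;> cases s v <;> decide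

lemma SimpleGraph.Walk.modEq_iff_modEq_iff_dartSum_arcDiff_eq_zero {G : SimpleGraph V}
    (o₁ o₂ : V → V → Bool) (m : ℕ) {u v : V} (w : G.Walk u v) :
    ((w.darts.filter fun d => o₁ d.fst d.snd).length ≡ m [MOD 2] ↔
      (w.darts.filter fun d => o₂ d.fst d.snd).length ≡ m [MOD 2]) ↔
      w.dartSum (arcDiff o₁ o₂) = 0 := by
  unfold arcDiff
  simp only [← ZMod.natCast_eq_natCast_iff, natCast_length_filter_darts, dartSum_sub]
  have two_valued : ∀ a b c : ZMod 2, (a = c ↔ b = c) ↔ b - a = 0 := by decide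
  exact two_valued _ _ _

end Orientation

theorem stmt19_general {V : Type*} (G : SimpleGraph V)
    (o₁ o₂ : V → V → Bool)
    (h₁ : ∀ u v, G.Adj u v → o₁ u v = !o₁ v u)
    (h₂ : ∀ u v, G.Adj u v → o₂ u v = !o₂ v u) :
    (∃ s : V → Bool, ∀ u v, G.Adj u v →
        Bool.xor (o₁ u v) (Bool.xor (s u) (s v)) = o₂ u v)
    ↔ ∀ (v : V) (w : G.Walk v v), w.IsCycle →
        ((w.darts.filter fun d => o₁ d.toProd.1 d.toProd.2).length ≡ w.length / 2 [MOD 2]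
          ↔ (w.darts.filter fun d => o₂ d.toProd.1 d.toProd.2).length ≡ w.length / 2 [MOD 2]) := by
  rw [exists_xor_eq_iff_exists_arcDiff_eq,
    SimpleGraph.exists_potential_iff_forall_isCycle_dartSum_eq_zero (arcDiff_swap h₁ h₂)]
  exact forall₂_congr fun v w => imp_congr_right fun _ =>
    (w.modEq_iff_modEq_iff_dartSum_arcDiff_eq_zero o₁ o₂ _).symm

/-- Two orientations of a bipartite graph `G` (encoded by `o : V → V → Bool`, where on
adjacent pairs `o u v = true` means the arc is directed `u → v`) are push equivalent iff
every cycle of `G` has the same balance in both: an oriented even cycle of length `2ℓ`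
is balanced iff its number of forward arcs is congruent to `ℓ` modulo `2`. -/
theorem stmt19 {V : Type*} (G : SimpleGraph V) (p : V → Bool)
    (hp : ∀ u v, G.Adj u v → p u ≠ p v)
    (o₁ o₂ : V → V → Bool)
    (h₁ : ∀ u v, G.Adj u v → o₁ u v = !o₁ v u)
    (h₂ : ∀ u v, G.Adj u v → o₂ u v = !o₂ v u) :
    (∃ s : V → Bool, ∀ u v, G.Adj u v →
        Bool.xor (o₁ u v) (Bool.xor (s u) (s v)) = o₂ u v)
    ↔ ∀ (v : V) (w : G.Walk v v), w.IsCycle →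
        ((w.darts.filter fun d => o₁ d.toProd.1 d.toProd.2).length ≡ w.length / 2 [MOD 2]
          ↔ (w.darts.filter fun d => o₂ d.toProd.1 d.toProd.2).length ≡ w.length / 2 [MOD 2]) :=
  stmt19_general G o₁ o₂ h₁ h₂
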